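/- Let q_k > 0 be summable with Σ_k q_k = q̄, let a > 0, β > 0, and define F(x) = Σ_k x_k (log(x_k/q_k) − 1) + q̄ + (aβ/2)(Σ_k x_k)² for x ∈ ℓ¹(ℝ₊) (and F = +∞ otherwise). Then F has a unique minimiser ξ ∈ ℓ¹(ℝ₊) given by ξ_k = (W₀(aβq̄)/(aβq̄)) q_k, where W₀ is the principal Lambert W branch. -/

import Mathlib

/-!
Put `W = aβ ∑ₖ ξₖ`. The stationarity equation of `F` is `ξₖ = e^{-W} qₖ`; summing it gives
`W e^W = aβ q̄`, so `W = W₀(aβ q̄)` and `e^{-W} = W₀(aβ q̄)/(aβ q̄)`. Minimality splits `F` into two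
parts. The tilted entropy `xₖ (log (xₖ/qₖ) − 1) + qₖ + W xₖ` equals `ξₖ klFun (xₖ/ξₖ)` up to a
constant, so its sum is strictly minimal at `x = ξ`; the remaining quadratic `(aβ/2) s² − W s` in
`s = ∑ₖ xₖ` is minimal at `s = W/(aβ) = ∑ₖ ξₖ`.
-/

open scoped ENNReal Classical

noncomputable def lambertW0 (y : ℝ) : ℝ :=
  Function.invFunOn (fun w : ℝ => w * Real.exp w) (Set.Ici (-1)) y

noncomputable def Fcmf (q : ℕ → ℝ) (a β : ℝ) (x : lp (fun _ : ℕ => ℝ) 1) : ℝ≥0∞ :=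
  if ∀ k : ℕ, 0 ≤ x k then
    (∑' k : ℕ, ENNReal.ofReal (x k * (Real.log (x k / q k) - 1) + q k))
      + ENNReal.ofReal (a * β / 2 * (∑' k : ℕ, x k) ^ 2)
  else ⊤

open Real InformationTheory

lemma exists_mem_Ici_mul_exp_eq {y : ℝ} (hy : 0 ≤ y) :
    ∃ w ∈ Set.Ici (-1 : ℝ), w * exp w = y := by
  have hcont : ContinuousOn (fun w : ℝ => w * exp w) (Set.Icc 0 y) := by fun_prop
  have hmem : y ∈ Set.Icc ((0 : ℝ) * exp 0) (y * exp y) :=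
    ⟨by simpa using hy, le_mul_of_one_le_right hy (one_le_exp hy)⟩
  obtain ⟨w, hw, hwy⟩ := intermediate_value_Icc hy hcont hmem
  exact ⟨w, le_trans (by norm_num) hw.1, hwy⟩

lemma lambertW0_mul_exp_self {y : ℝ} (hy : 0 ≤ y) : lambertW0 y * exp (lambertW0 y) = y :=
  Function.invFunOn_eq (exists_mem_Ici_mul_exp_eq hy)

lemma lambertW0_div_self {y : ℝ} (hy : 0 < y) : lambertW0 y / y = exp (-lambertW0 y) := by
  have h := lambertW0_mul_exp_self hy.le
  rw [div_eq_iff hy.ne', exp_neg]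
  field_simp
  exact h

noncomputable def entropyTerm (p t : ℝ) : ℝ := t * (log (t / p) - 1) + p

lemma entropyTerm_eq_mul_klFun {p : ℝ} (hp : p ≠ 0) (t : ℝ) :
    entropyTerm p t = p * klFun (t / p) := by
  rw [entropyTerm, klFun_apply]
  field_simp
  ring

lemma entropyTerm_nonneg {p t : ℝ} (hp : 0 < p) (ht : 0 ≤ t) : 0 ≤ entropyTerm p t := by
  rw [entropyTerm_eq_mul_klFun hp.ne']
  exact mul_nonneg hp.le (klFun_nonneg (div_nonneg ht hp.le))

lemma entropyTerm_add_mul_eq {p : ℝ} (hp : p ≠ 0) (W t : ℝ) :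
    entropyTerm p t + W * t
      = exp (-W) * p * klFun (t / (exp (-W) * p)) + (1 - exp (-W)) * p := by
  have hlog : t * log (t / (exp (-W) * p)) = t * log (t / p) + W * t := by
    rcases eq_or_ne t 0 with rfl | ht
    · simp
    rw [exp_neg, div_mul_eq_div_div_swap, div_inv_eq_mul,
      log_mul (div_ne_zero ht hp) (exp_ne_zero W), log_exp]
    ring
  rw [← entropyTerm_eq_mul_klFun (by positivity), entropyTerm, entropyTerm]
  linear_combination -hlog

lemma entropyTerm_exp_neg_mul {p : ℝ} (hp : p ≠ 0) (W : ℝ) :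
    entropyTerm p (exp (-W) * p) + W * (exp (-W) * p) = (1 - exp (-W)) * p := by
  rw [entropyTerm_add_mul_eq hp, div_self (by positivity), klFun_one, mul_zero, zero_add]

lemma le_entropyTerm_add_mul {p t : ℝ} (hp : 0 < p) (ht : 0 ≤ t) (W : ℝ) :
    (1 - exp (-W)) * p ≤ entropyTerm p t + W * t := by
  have hξ : 0 < exp (-W) * p := by positivity
  rw [entropyTerm_add_mul_eq hp.ne']
  exact le_add_of_nonneg_left (mul_nonneg hξ.le (klFun_nonneg (div_nonneg ht hξ.le)))

lemma lt_entropyTerm_add_mul {p t : ℝ} (hp : 0 < p) (ht : 0 ≤ t) {W : ℝ}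
    (hne : t ≠ exp (-W) * p) : (1 - exp (-W)) * p < entropyTerm p t + W * t := by
  have hξ : 0 < exp (-W) * p := by positivity
  have hkl : 0 < klFun (t / (exp (-W) * p)) :=
    (klFun_nonneg (div_nonneg ht hξ.le)).lt_of_ne' fun h =>
      hne ((div_eq_one_iff_eq hξ.ne').1 ((klFun_eq_zero_iff (div_nonneg ht hξ.le)).1 h))
  rw [entropyTerm_add_mul_eq hp.ne']
  exact lt_add_of_pos_left _ (mul_pos hξ hkl)

lemma summable_entropyTerm_exp_neg_mul {q : ℕ → ℝ} (hq : ∀ k, 0 < q k) (hqs : Summable q)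
    (W : ℝ) : Summable fun k => entropyTerm (q k) (exp (-W) * q k) :=
  ((hqs.mul_left (1 - exp (-W))).sub ((hqs.mul_left (exp (-W))).mul_left W)).congr fun k => by
    linarith [entropyTerm_exp_neg_mul (hq k).ne' W]

lemma tsum_entropyTerm_add_sq_lt {q x : ℕ → ℝ} {c W : ℝ} (hq : ∀ k, 0 < q k)
    (hqs : Summable q) (hc : 0 ≤ c) (hx : ∀ k, 0 ≤ x k) (hxs : Summable x)
    (hs : Summable fun k => entropyTerm (q k) (x k)) (hW : c * ∑' k, exp (-W) * q k = W)
    (hne : x ≠ fun k => exp (-W) * q k) :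
    ∑' k, entropyTerm (q k) (exp (-W) * q k) + c / 2 * (∑' k, exp (-W) * q k) ^ 2
      < ∑' k, entropyTerm (q k) (x k) + c / 2 * (∑' k, x k) ^ 2 := by
  have hξs : Summable fun k => exp (-W) * q k := hqs.mul_left _
  have hξ : ∑' k, entropyTerm (q k) (exp (-W) * q k) + W * ∑' k, exp (-W) * q k
      = (1 - exp (-W)) * ∑' k, q k := by
    rw [← tsum_mul_left, ← tsum_mul_left, ← (summable_entropyTerm_exp_neg_mul hq hqs W).tsum_add
      (hξs.mul_left W)]
    exact tsum_congr fun k => entropyTerm_exp_neg_mul (hq k).ne' W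
  obtain ⟨k, hk⟩ := Function.ne_iff.1 hne
  have hx : (1 - exp (-W)) * ∑' k, q k < ∑' k, entropyTerm (q k) (x k) + W * ∑' k, x k := by
    rw [← tsum_mul_left, ← tsum_mul_left, ← hs.tsum_add (hxs.mul_left W)]
    exact Summable.tsum_lt_tsum (fun k => le_entropyTerm_add_mul (hq k) (hx k) W)
      (lt_entropyTerm_add_mul (hq k) (hx k) hk) (hqs.mul_left _) (hs.add (hxs.mul_left W))
  set S := ∑' k, x k
  set T := ∑' k, exp (-W) * q k
  have hquad : c / 2 * T ^ 2 - W * T ≤ c / 2 * S ^ 2 - W * S := by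
    nlinarith [mul_nonneg hc (sq_nonneg (S - T)), congrArg (· * (S - T)) hW]
  linarith

lemma memℓp_one_of_summable {α : Type*} {f : α → ℝ} (hf : Summable f) : Memℓp f 1 :=
  memℓp_gen (by simpa using hf.abs)

section

variable {q : ℕ → ℝ} {a β : ℝ} {x : lp (fun _ : ℕ => ℝ) 1}

lemma Fcmf_of_not_nonneg (hx : ¬ ∀ k, 0 ≤ x k) : Fcmf q a β x = ⊤ := if_neg hx

lemma Fcmf_of_nonneg (hx : ∀ k, 0 ≤ x k) :
    Fcmf q a β x = (∑' k, ENNReal.ofReal (entropyTerm (q k) (x k)))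
      + ENNReal.ofReal (a * β / 2 * (∑' k, x k) ^ 2) := if_pos hx

lemma Fcmf_of_not_summable (hq : ∀ k, 0 < q k) (hx : ∀ k, 0 ≤ x k)
    (hs : ¬ Summable fun k => entropyTerm (q k) (x k)) : Fcmf q a β x = ⊤ := by
  rw [Fcmf_of_nonneg hx, ENNReal.add_eq_top]
  refine .inl (by_contra fun h => hs ?_)
  exact (ENNReal.summable_toReal h).congr fun k =>
    ENNReal.toReal_ofReal (entropyTerm_nonneg (hq k) (hx k))

lemma Fcmf_of_summable (hq : ∀ k, 0 < q k) (hab : 0 ≤ a * β) (hx : ∀ k, 0 ≤ x k)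
    (hs : Summable fun k => entropyTerm (q k) (x k)) :
    Fcmf q a β x
      = ENNReal.ofReal (∑' k, entropyTerm (q k) (x k) + a * β / 2 * (∑' k, x k) ^ 2) := by
  have hnn k : 0 ≤ entropyTerm (q k) (x k) := entropyTerm_nonneg (hq k) (hx k)
  rw [Fcmf_of_nonneg hx, ← ENNReal.ofReal_tsum_of_nonneg hnn hs,
    ← ENNReal.ofReal_add (tsum_nonneg hnn) (by positivity)]

theorem Fcmf_lt_of_eq_exp_neg_mul (hq : ∀ k, 0 < q k) (hqs : Summable q) (hab : 0 ≤ a * β)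
    {ξ : lp (fun _ : ℕ => ℝ) 1} {W : ℝ} (hξ : ⇑ξ = fun k => exp (-W) * q k)
    (hW : a * β * ∑' k, ξ k = W) (hx : x ≠ ξ) : Fcmf q a β ξ < Fcmf q a β x := by
  have hξnn : ∀ k, 0 ≤ ξ k := fun k => by rw [hξ]; exact (mul_pos (exp_pos _) (hq k)).le
  have hξs : Summable fun k => entropyTerm (q k) (ξ k) := by
    rw [hξ]; exact summable_entropyTerm_exp_neg_mul hq hqs W
  rw [Fcmf_of_summable hq hab hξnn hξs]
  by_cases hxnn : ∀ k, 0 ≤ x k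
  · by_cases hs : Summable fun k => entropyTerm (q k) (x k)
    · rw [Fcmf_of_summable hq hab hxnn hs, ENNReal.ofReal_lt_ofReal_iff_of_nonneg
        (add_nonneg (tsum_nonneg fun k => entropyTerm_nonneg (hq k) (hξnn k)) (by positivity)), hξ]
      rw [hξ] at hW
      exact tsum_entropyTerm_add_sq_lt hq hqs hab hxnn (lp.memℓp x).summable_of_one hs hW
        (fun h => hx (lp.ext (h.trans hξ.symm)))
    · rw [Fcmf_of_not_summable hq hxnn hs]
      exact ENNReal.ofReal_lt_top
  · rw [Fcmf_of_not_nonneg hxnn]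
    exact ENNReal.ofReal_lt_top

end

/-- For summable positive `q` with `q̄ = ∑ₖ q k`, and `a, β > 0`, the CMF rate function
has a unique minimiser `ξ`, given by `ξ k = (W₀(aβq̄)/(aβq̄)) q k`. -/
theorem stmt19 (q : ℕ → ℝ) (a β : ℝ) (hq : ∀ k, 0 < q k) (hqs : Summable q)
    (ha : 0 < a) (hβ : 0 < β) :
    ∃ ξ : lp (fun _ : ℕ => ℝ) 1,
      (∀ k : ℕ, ξ k =
        (lambertW0 (a * β * (∑' j : ℕ, q j)) / (a * β * (∑' j : ℕ, q j))) * q k) ∧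
      (∀ x : lp (fun _ : ℕ => ℝ) 1, x ≠ ξ → Fcmf q a β ξ < Fcmf q a β x) := by
  have hy : 0 < a * β * ∑' j, q j :=
    mul_pos (mul_pos ha hβ) (hqs.tsum_pos (fun k => (hq k).le) 0 (hq 0))
  set W := lambertW0 (a * β * ∑' j, q j)
  let ξ : lp (fun _ : ℕ => ℝ) 1 :=
    ⟨fun k => exp (-W) * q k, memℓp_one_of_summable (hqs.mul_left _)⟩
  have hW : a * β * ∑' k, ξ k = W := by
    calc a * β * ∑' k, ξ k = exp (-W) * (a * β * ∑' j, q j) := by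
          change a * β * ∑' k, exp (-W) * q k = _
          rw [tsum_mul_left]
          ring
      _ = W := ((div_eq_iff hy.ne').1 (lambertW0_div_self hy)).symm
  refine ⟨ξ, fun k => by rw [lambertW0_div_self hy], fun x hx => ?_⟩
  exact Fcmf_lt_of_eq_exp_neg_mul hq hqs (mul_pos ha hβ).le rfl hW hx
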